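/- Let −1 < α ≤ 0 ≤ β < 1 and define k(x,y) = (x^α + y^α)(x^β + y^β) for x,y > 0. Let a satisfy hypothesis (A.0), let m > 1 and θ ∈ ((1−α)/2, 1], and suppose that sup_{y>1} y^β·(1+a(y))^{−θ} < ∞. Then k satisfies hypothesis (K1) with θ₀ = (1−α)/2: there exists k_* > 0 such that k(x,y) ≤ k_*·ℓ(x)ℓ(y)/(x+y+(x+y)^m) for all x,y > 0. -/

import Mathlib

/-!
Assume `x ≤ y` by symmetry. Monotonicity of the powers gives `k(x,y) ≤ 4 x^α y^β` and
`x + y + (x+y)^m ≤ (2 + 2^m) max(y, y^m)`. The factor `x^α` is at most `ℓ(x)`, and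
`y^β max(y, y^m)` is at most a constant times `ℓ(y)`: for `y < 1` because
`y^(β+1) ≤ y^α`, and for `y ≥ 1` because `y^β (1+a(y))^(-θ)` is bounded.
-/

open MeasureTheory Set Real
open scoped ENNReal

/-- The weight `ℓ`: `ℓ(x) = x^(1-2θ₀)` for `x ∈ (0,1)` and
`ℓ(x) = (1+a(x))^θ · x^m` for `x > 1`. -/
noncomputable def ell (a : ℝ → ℝ) (θ₀ θ m : ℝ) (x : ℝ) : ℝ :=
  if x < 1 then x ^ (1 - 2 * θ₀) else (1 + a x) ^ θ * x ^ m

section Weight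

variable {a : ℝ → ℝ} {α θ₀ θ m x : ℝ}

lemma ell_of_lt_one (hx : x < 1) : ell a ((1 - α) / 2) θ m x = x ^ α := by
  rw [ell, if_pos hx]
  ring_nf

lemma ell_of_one_le (hx : 1 ≤ x) : ell a θ₀ θ m x = (1 + a x) ^ θ * x ^ m := by
  rw [ell, if_neg hx.not_gt]

lemma one_le_ell_of_one_le (hax : 0 ≤ a x) (hθ : 0 ≤ θ) (hm : 0 ≤ m) (hx : 1 ≤ x) :
    1 ≤ ell a θ₀ θ m x := by
  rw [ell_of_one_le hx]
  exact one_le_mul_of_one_le_of_one_le (one_le_rpow (by linarith) hθ) (one_le_rpow hx hm)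

lemma rpow_le_ell (hα : α ≤ 0) (hax : 0 ≤ a x) (hθ : 0 ≤ θ) (hm : 0 ≤ m) :
    x ^ α ≤ ell a ((1 - α) / 2) θ m x := by
  rcases lt_or_ge x 1 with hx1 | hx1
  · exact (ell_of_lt_one hx1).ge
  · exact (rpow_le_one_of_one_le_of_nonpos hx1 hα).trans (one_le_ell_of_one_le hax hθ hm hx1)

end Weight

lemma power_kernel_le_of_le {α β x y : ℝ} (hα : α ≤ 0) (hβ : 0 ≤ β) (hx : 0 < x)
    (hxy : x ≤ y) : (x ^ α + y ^ α) * (x ^ β + y ^ β) ≤ 4 * (x ^ α * y ^ β) := by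
  have hyα : y ^ α ≤ x ^ α := rpow_le_rpow_of_nonpos hx hxy hα
  have hxβ : x ^ β ≤ y ^ β := rpow_le_rpow hx.le hxy hβ
  have := rpow_pos_of_pos hx α
  have := rpow_pos_of_pos hx β
  have := rpow_pos_of_pos (hx.trans_le hxy) α
  nlinarith

lemma add_add_rpow_le_of_le {m x y : ℝ} (hm : 0 ≤ m) (hx : 0 ≤ x) (hxy : x ≤ y) :
    x + y + (x + y) ^ m ≤ (2 + 2 ^ m) * max y (y ^ m) := by
  have hy : 0 ≤ y := hx.trans hxy
  have hpow : (x + y) ^ m ≤ 2 ^ m * y ^ m := by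
    rw [← mul_rpow zero_le_two hy]
    exact rpow_le_rpow (by positivity) (by linarith) hm
  have := le_max_left y (y ^ m)
  have := le_max_right y (y ^ m)
  have : (0 : ℝ) ≤ 2 ^ m := by positivity
  nlinarith

lemma rpow_le_max_mul_one_add_rpow {a : ℝ → ℝ} {β θ S y : ℝ}
    (hS : ∀ y ∈ Ioi (1 : ℝ), y ^ β * (1 + a y) ^ (-θ) ≤ S)
    (hay : 0 ≤ a y) (hθ : 0 ≤ θ) (hy : 1 ≤ y) :
    y ^ β ≤ max S 1 * (1 + a y) ^ θ := by
  have hpos : 0 < 1 + a y := by linarith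
  rcases hy.eq_or_lt with rfl | hy1
  · rw [one_rpow]
    exact one_le_mul_of_one_le_of_one_le (le_max_right S 1) (one_le_rpow (by linarith) hθ)
  · calc y ^ β = y ^ β * (1 + a y) ^ (-θ) * (1 + a y) ^ θ := by
          rw [mul_assoc, ← rpow_add hpos, neg_add_cancel, rpow_zero, mul_one]
      _ ≤ max S 1 * (1 + a y) ^ θ := by
          gcongr
          exact (hS y hy1).trans (le_max_left S 1)

lemma rpow_mul_max_le_ell {a : ℝ → ℝ} {α β θ m S y : ℝ} (hα : α ≤ 0) (hβ : 0 ≤ β)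
    (hm : 1 ≤ m) (hθ : 0 ≤ θ) (hS : ∀ y ∈ Ioi (1 : ℝ), y ^ β * (1 + a y) ^ (-θ) ≤ S)
    (hay : 0 ≤ a y) (hy : 0 < y) :
    y ^ β * max y (y ^ m) ≤ max S 1 * ell a ((1 - α) / 2) θ m y := by
  rcases lt_or_ge y 1 with hy1 | hy1
  · have hmax : max y (y ^ m) = y := by
      simpa using rpow_le_rpow_of_exponent_ge hy hy1.le hm
    rw [hmax, ell_of_lt_one hy1]
    calc y ^ β * y = y ^ (β + 1) := by rw [rpow_add hy, rpow_one]
      _ ≤ y ^ α := rpow_le_rpow_of_exponent_ge hy hy1.le (by linarith)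
      _ ≤ max S 1 * y ^ α := le_mul_of_one_le_left (by positivity) (le_max_right S 1)
  · have hmax : max y (y ^ m) = y ^ m := by
      simpa using rpow_le_rpow_of_exponent_le hy1 hm
    rw [hmax, ell_of_one_le hy1, ← mul_assoc]
    gcongr
    exact rpow_le_max_mul_one_add_rpow hS hay hθ hy1

lemma power_kernel_mul_le_of_le {a : ℝ → ℝ} {α β θ m S x y : ℝ} (hα : α ≤ 0)
    (hβ : 0 ≤ β) (ha : ∀ x ∈ Ioi (0 : ℝ), 0 ≤ a x) (hm : 1 ≤ m) (hθ : 0 ≤ θ)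
    (hS : ∀ y ∈ Ioi (1 : ℝ), y ^ β * (1 + a y) ^ (-θ) ≤ S)
    (hx : 0 < x) (hxy : x ≤ y) :
    (x ^ α + y ^ α) * (x ^ β + y ^ β) * (x + y + (x + y) ^ m) ≤
      4 * (2 + 2 ^ m) * max S 1 * ell a ((1 - α) / 2) θ m x * ell a ((1 - α) / 2) θ m y := by
  have hy : 0 < y := hx.trans_le hxy
  have hxα : 0 ≤ x ^ α := (rpow_pos_of_pos hx α).le
  have hxℓ : x ^ α ≤ ell a ((1 - α) / 2) θ m x := rpow_le_ell hα (ha x hx) hθ (by linarith)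
  calc (x ^ α + y ^ α) * (x ^ β + y ^ β) * (x + y + (x + y) ^ m)
      ≤ 4 * (x ^ α * y ^ β) * ((2 + 2 ^ m) * max y (y ^ m)) :=
        mul_le_mul (power_kernel_le_of_le hα hβ hx hxy)
          (add_add_rpow_le_of_le (by linarith) hx.le hxy) (by positivity) (by positivity)
    _ = 4 * (2 + 2 ^ m) * (x ^ α * (y ^ β * max y (y ^ m))) := by ring
    _ ≤ 4 * (2 + 2 ^ m) * (ell a ((1 - α) / 2) θ m x * (max S 1 * ell a ((1 - α) / 2) θ m y)) :=
        mul_le_mul_of_nonneg_left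
          (mul_le_mul hxℓ (rpow_mul_max_le_ell hα hβ hm hθ hS (ha y hy) hy) (by positivity)
            (hxα.trans hxℓ))
          (by positivity)
    _ = _ := by ring

theorem power_kernel_satisfies_K1 (a : ℝ → ℝ) (α β θ m : ℝ)
    (hα0 : α ≤ 0) (hβ0 : 0 ≤ β)
    (ha0 : ∀ x ∈ Ioi (0 : ℝ), 0 ≤ a x)
    (hm : 1 < m) (hθl : (1 - α) / 2 < θ)
    (hS : ∃ S : ℝ, ∀ y ∈ Ioi (1 : ℝ), y ^ β * (1 + a y) ^ (-θ) ≤ S) :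
    ∃ kstar : ℝ, 0 < kstar ∧ ∀ x y : ℝ, 0 < x → 0 < y →
      (x ^ α + y ^ α) * (x ^ β + y ^ β) ≤
        kstar * ell a ((1 - α) / 2) θ m x * ell a ((1 - α) / 2) θ m y /
          (x + y + (x + y) ^ m) := by
  obtain ⟨S, hS⟩ := hS
  have hθ : 0 ≤ θ := by linarith
  refine ⟨4 * (2 + 2 ^ m) * max S 1, by positivity, fun x y hx hy => ?_⟩
  rw [le_div_iff₀ (by positivity)]
  rcases le_total x y with hxy | hyx
  · exact power_kernel_mul_le_of_le hα0 hβ0 ha0 hm.le hθ hS hx hxy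
  · have := power_kernel_mul_le_of_le hα0 hβ0 ha0 hm.le hθ hS hy hyx
    rw [add_comm y x] at this
    linarith
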